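/- arXiv:1605.05220 — 5 statements merged into one kernel-verified Lean document; each statement's English description precedes it below -/
import Mathlib

section
/- Let (R,m) be a Noetherian local ring and let M, N be finitely generated R-modules with m-stable filtrations {M^j} and {N^j}. Define, for each j, L^j ⊆ M ⊗_R N as the sum over j1 + j2 = j of the images of the natural maps M^{j1} ⊗_R N^{j2} → M ⊗_R N. Then {L^j}_{j∈ℕ} is an m-stable filtration of M ⊗_R N. -/
/-!
The image of `M^{j₁} ⊗ N^{j₂}` in `M ⊗ N` is `map₂ (mk R M N) M^{j₁} N^{j₂}`, and the bilinear image
`map₂ f` commutes with multiplication of either argument by an ideal. So each axiom of an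
`m`-stable filtration for `L` follows summand by summand from that of `{M^j}` or of `{N^j}`: past
`j₀(M) + j₀(N)`, every pair `j₁ + j₂ = j + 1` has `j₁ > j₀(M)` or `j₂ > j₀(N)`, and then one factor,
hence the summand, lies in `m` times the previous stage.
-/

open TensorProduct

def IsMStableFiltration {R M : Type*} [CommRing R] [AddCommGroup M] [Module R M]
    (m : Ideal R) (F : ℕ → Submodule R M) : Prop :=
  F 0 = ⊤ ∧ (∀ j, F (j + 1) ≤ F j) ∧ (∀ j, m • F j ≤ F (j + 1)) ∧
    ∃ j₀, ∀ j ≥ j₀, m • F j = F (j + 1)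

namespace Submodule

variable {R M N P : Type*} [CommSemiring R] [AddCommMonoid M] [Module R M]
  [AddCommMonoid N] [Module R N] [AddCommMonoid P] [Module R P]

theorem map₂_smul_left (f : M →ₗ[R] N →ₗ[R] P) (I : Ideal R) (p : Submodule R M)
    (q : Submodule R N) : map₂ f (I • p) q = I • map₂ f p q := by
  refine le_antisymm (map₂_le.mpr fun a ha b hb => ?_) (smul_le.mpr fun r hr x hx => ?_)
  · refine smul_induction_on ha (fun r hr a ha => ?_) (fun a a' h h' => ?_)
    · simpa using smul_mem_smul hr (apply_mem_map₂ f ha hb)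
    · simpa using add_mem h h'
  · -- `x ↦ r • x` pulls `map₂ f (I • p) q` back to a submodule containing every `f a b`.
    have : map₂ f p q ≤ (map₂ f (I • p) q).comap (LinearMap.lsmul R P r) :=
      map₂_le.mpr fun a ha b hb => by
        simpa using apply_mem_map₂ f (smul_mem_smul hr ha) hb
    exact this hx

theorem map₂_smul_right (f : M →ₗ[R] N →ₗ[R] P) (I : Ideal R) (p : Submodule R M)
    (q : Submodule R N) : map₂ f p (I • q) = I • map₂ f p q := by
  rw [← map₂_flip, map₂_smul_left, map₂_flip]

end Submodule

section TensorFiltration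

variable {R M N : Type*} [CommSemiring R] [AddCommMonoid M] [Module R M]
  [AddCommMonoid N] [Module R N]

def tensorFiltration (FM : ℕ → Submodule R M) (FN : ℕ → Submodule R N) (j : ℕ) :
    Submodule R (M ⊗[R] N) :=
  ⨆ (p : ℕ × ℕ) (_ : p.1 + p.2 = j), Submodule.map₂ (mk R M N) (FM p.1) (FN p.2)

variable {FM : ℕ → Submodule R M} {FN : ℕ → Submodule R N} {I : Ideal R}

theorem map₂_le_tensorFiltration {i k j : ℕ} (h : i + k = j) :
    Submodule.map₂ (mk R M N) (FM i) (FN k) ≤ tensorFiltration FM FN j :=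
  le_iSup₂ (f := fun (p : ℕ × ℕ) (_ : p.1 + p.2 = j) =>
    Submodule.map₂ (mk R M N) (FM p.1) (FN p.2)) (i, k) h

theorem tensorFiltration_zero (hM : FM 0 = ⊤) (hN : FN 0 = ⊤) :
    tensorFiltration FM FN 0 = ⊤ :=
  top_le_iff.mp <| by
    simpa [hM, hN, map₂_mk_top_top_eq_top] using
      map₂_le_tensorFiltration (FM := FM) (FN := FN) (zero_add 0)

theorem tensorFiltration_succ_le (hM : ∀ j, FM (j + 1) ≤ FM j) (hN : ∀ j, FN (j + 1) ≤ FN j)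
    (j : ℕ) : tensorFiltration FM FN (j + 1) ≤ tensorFiltration FM FN j := by
  refine iSup₂_le fun ⟨i, k⟩ hik => ?_
  dsimp only at hik
  cases i with
  | zero =>
    obtain rfl : k = j + 1 := by omega
    exact (Submodule.map₂_le_map₂_right (hN j)).trans (map₂_le_tensorFiltration (zero_add j))
  | succ i =>
    exact (Submodule.map₂_le_map₂_left (hM i)).trans (map₂_le_tensorFiltration (by omega))

theorem smul_tensorFiltration_le (hM : ∀ j, I • FM j ≤ FM (j + 1)) (j : ℕ) :
    I • tensorFiltration FM FN j ≤ tensorFiltration FM FN (j + 1) := by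
  simp only [tensorFiltration, Submodule.smul_iSup, ← Submodule.map₂_smul_left]
  refine iSup₂_le fun ⟨i, k⟩ hik => ?_
  dsimp only at hik
  exact (Submodule.map₂_le_map₂_left (hM i)).trans (map₂_le_tensorFiltration (by omega))

theorem tensorFiltration_succ_le_smul {jM jN : ℕ} (hM : ∀ i ≥ jM, FM (i + 1) ≤ I • FM i)
    (hN : ∀ k ≥ jN, FN (k + 1) ≤ I • FN k) {j : ℕ} (hj : jM + jN ≤ j) :
    tensorFiltration FM FN (j + 1) ≤ I • tensorFiltration FM FN j := by
  refine iSup₂_le fun ⟨i, k⟩ hik => ?_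
  dsimp only at hik ⊢
  rcases le_or_gt i jM with hi | hi
  · obtain ⟨k, rfl⟩ : ∃ k', k = k' + 1 := ⟨k - 1, by omega⟩
    calc Submodule.map₂ (mk R M N) (FM i) (FN (k + 1))
        ≤ Submodule.map₂ (mk R M N) (FM i) (I • FN k) :=
          Submodule.map₂_le_map₂_right (hN k (by omega))
      _ = I • Submodule.map₂ (mk R M N) (FM i) (FN k) := Submodule.map₂_smul_right ..
      _ ≤ I • tensorFiltration FM FN j :=
          smul_mono_right _ (map₂_le_tensorFiltration (by omega))
  · obtain ⟨i, rfl⟩ : ∃ i', i = i' + 1 := ⟨i - 1, by omega⟩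
    calc Submodule.map₂ (mk R M N) (FM (i + 1)) (FN k)
        ≤ Submodule.map₂ (mk R M N) (I • FM i) (FN k) :=
          Submodule.map₂_le_map₂_left (hM i (by omega))
      _ = I • Submodule.map₂ (mk R M N) (FM i) (FN k) := Submodule.map₂_smul_left ..
      _ ≤ I • tensorFiltration FM FN j :=
          smul_mono_right _ (map₂_le_tensorFiltration (by omega))

end TensorFiltration

theorem IsMStableFiltration.tensor {R M N : Type*} [CommRing R] [AddCommGroup M] [Module R M]
    [AddCommGroup N] [Module R N] {I : Ideal R} {FM : ℕ → Submodule R M}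
    {FN : ℕ → Submodule R N} (hM : IsMStableFiltration I FM) (hN : IsMStableFiltration I FN) :
    IsMStableFiltration I (tensorFiltration FM FN) := by
  obtain ⟨hM0, hManti, hMsmul, jM, hMstab⟩ := hM
  obtain ⟨hN0, hNanti, -, jN, hNstab⟩ := hN
  refine ⟨tensorFiltration_zero hM0 hN0, tensorFiltration_succ_le hManti hNanti,
    smul_tensorFiltration_le hMsmul, jM + jN, fun j hj => ?_⟩
  exact (smul_tensorFiltration_le hMsmul j).antisymm <| tensorFiltration_succ_le_smul
    (fun i hi => (hMstab i hi).ge) (fun k hk => (hNstab k hk).ge) hj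

theorem tensor_filtration_isMStable_general (R M N : Type*) [CommRing R]
    [IsLocalRing R] [AddCommGroup M] [Module R M]
    [AddCommGroup N] [Module R N]
    (FM : ℕ → Submodule R M) (FN : ℕ → Submodule R N)
    (hFM : IsMStableFiltration (IsLocalRing.maximalIdeal R) FM)
    (hFN : IsMStableFiltration (IsLocalRing.maximalIdeal R) FN) :
    IsMStableFiltration (IsLocalRing.maximalIdeal R)
      (fun j => ⨆ (p : ℕ × ℕ) (_ : p.1 + p.2 = j),
        LinearMap.range (TensorProduct.map (FM p.1).subtype (FN p.2).subtype)) := by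
  convert hFM.tensor hFN using 2 with j
  simp only [tensorFiltration, range_mapIncl]

/-- Let `(R,m)` be Noetherian local and `M`, `N` finitely generated
`R`-modules with `m`-stable filtrations `{M^j}`, `{N^j}`.  For each `j` let
`L^j ⊆ M ⊗_R N` be the sum, over `j₁ + j₂ = j`, of the images of the natural maps
`M^{j₁} ⊗_R N^{j₂} → M ⊗_R N`.  Then `{L^j}` is an `m`-stable filtration of `M ⊗_R N`. -/
theorem tensor_filtration_isMStable (R M N : Type*) [CommRing R] [IsNoetherianRing R]
    [IsLocalRing R] [AddCommGroup M] [Module R M] [Module.Finite R M]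
    [AddCommGroup N] [Module R N] [Module.Finite R N]
    (FM : ℕ → Submodule R M) (FN : ℕ → Submodule R N)
    (hFM : IsMStableFiltration (IsLocalRing.maximalIdeal R) FM)
    (hFN : IsMStableFiltration (IsLocalRing.maximalIdeal R) FN) :
    IsMStableFiltration (IsLocalRing.maximalIdeal R)
      (fun j => ⨆ (p : ℕ × ℕ) (_ : p.1 + p.2 = j),
        LinearMap.range (TensorProduct.map (FM p.1).subtype (FN p.2).subtype)) :=
  tensor_filtration_isMStable_general R M N FM FN hFM hFN
end

section
/- Let (R,m) be a Noetherian local ring, M a finitely generated R-module with an m-stable filtration {M^j}, and N ⊆ M a submodule. Then the induced filtration {N ∩ M^j}_{j∈ℕ} on N is m-stable. -/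
/-- Artin–Rees consequence, top version, universe-polymorphic: route through a
surjection from `Fin n → R`. -/
theorem aux_artin_rees_top {R : Type*} {M : Type*} [CommRing R] [IsNoetherianRing R]
    [AddCommGroup M] [Module R M] [Module.Finite R M] (I : Ideal R)
    (N : Submodule R M) :
    ∃ k, ∀ n ≥ k, I • (I ^ n • (⊤ : Submodule R M) ⊓ N) = I ^ (n + 1) • ⊤ ⊓ N := by
  obtain ⟨d, π, hπ⟩ := Module.Finite.exists_fin' R M
  set Nt : Submodule R (Fin d → R) := Submodule.comap π N with hNt
  obtain ⟨k, hk⟩ := Ideal.exists_pow_inf_eq_pow_smul I Nt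
  refine ⟨k, fun n hn => ?_⟩
  have e1 : I ^ (n + 1) • (⊤ : Submodule R (Fin d → R)) ⊓ Nt
      = I • (I ^ n • ⊤ ⊓ Nt) := by
    rw [hk (n + 1) (le_trans hn (Nat.le_succ n)), hk n hn, ← Submodule.smul_assoc,
      show n + 1 - k = 1 + (n - k) by omega, pow_add, pow_one, Submodule.smul_assoc,
      ← Submodule.smul_assoc, Ideal.smul_eq_mul, mul_comm, ← Ideal.smul_eq_mul,
      Submodule.smul_assoc]
  have htop : ∀ j : ℕ, Submodule.map π (I ^ j • (⊤ : Submodule R (Fin d → R)))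
      = I ^ j • (⊤ : Submodule R M) := by
    intro j
    rw [Submodule.map_smul'', Submodule.map_top, LinearMap.range_eq_top.mpr hπ]
  have hmap : ∀ j : ℕ, Submodule.map π (I ^ j • (⊤ : Submodule R (Fin d → R)) ⊓ Nt)
      = I ^ j • (⊤ : Submodule R M) ⊓ N := by
    intro j
    rw [hNt, ← Submodule.map_inf_eq_map_inf_comap, htop]
  have := congrArg (Submodule.map π) e1
  rw [hmap, Submodule.map_smul'', hmap] at this
  exact this.symm

/-- Artin–Rees consequence for a general submodule `P` in place of `⊤`. -/
theorem aux_artin_rees {R M : Type*} [CommRing R] [IsNoetherianRing R]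
    [AddCommGroup M] [Module R M] [Module.Finite R M] (I : Ideal R)
    (P N : Submodule R M) :
    ∃ k, ∀ n ≥ k, I • (I ^ n • P ⊓ N) = I ^ (n + 1) • P ⊓ N := by
  haveI : Module.Finite R P :=
    Module.Finite.iff_fg.mpr (IsNoetherian.noetherian P)
  obtain ⟨k, hk⟩ := aux_artin_rees_top I (Submodule.comap P.subtype N)
  refine ⟨k, fun n hn => ?_⟩
  have hmap : ∀ j : ℕ, Submodule.map P.subtype
      (I ^ j • (⊤ : Submodule R P) ⊓ Submodule.comap P.subtype N)
      = I ^ j • P ⊓ N := by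
    intro j
    rw [← Submodule.map_inf_eq_map_inf_comap, Submodule.map_smul'', Submodule.map_top,
      Submodule.range_subtype]
  have := congrArg (Submodule.map P.subtype) (hk n hn)
  rw [hmap, Submodule.map_smul'', hmap] at this
  exact this

/-- Let `(R,m)` be Noetherian local, `M` a finitely generated `R`-module
with an `m`-stable filtration `{M^j}`, and `N ⊆ M` a submodule.  Then the induced
filtration `{N ∩ M^j}` on `N` is `m`-stable (a consequence of the Artin–Rees lemma).
The filtration on `N` is encoded as the family of preimages of the `M^j` under the
inclusion `N → M`. -/
theorem induced_filtration_on_submodule_isMStable (R M : Type*) [CommRing R]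
    [IsNoetherianRing R] [IsLocalRing R] [AddCommGroup M] [Module R M] [Module.Finite R M]
    (F : ℕ → Submodule R M) (hF : IsMStableFiltration (IsLocalRing.maximalIdeal R) F)
    (N : Submodule R M) :
    IsMStableFiltration (IsLocalRing.maximalIdeal R)
      (fun j => (F j).comap N.subtype) := by
  obtain ⟨h0, hmono, hsmul, j₀, hstab⟩ := hF
  set m := IsLocalRing.maximalIdeal R with hm
  set P := F j₀ with hP
  have hpow : ∀ k : ℕ, F (j₀ + k) = m ^ k • P := by
    intro k
    induction k with
    | zero => simp [hP]
    | succ k ih =>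
      rw [show j₀ + (k + 1) = (j₀ + k) + 1 by ring, ← hstab (j₀ + k) (Nat.le_add_right _ _),
        ih, ← Submodule.smul_assoc, pow_succ, Ideal.smul_eq_mul, mul_comm]
  obtain ⟨k, hk⟩ := aux_artin_rees m P N
  have hinj : Function.Injective N.subtype := N.injective_subtype
  -- translation between comap and inf
  have key : ∀ j, m • (F j).comap N.subtype = (m • (F j ⊓ N)).comap N.subtype := by
    intro j
    have h1 : Submodule.map N.subtype (m • (F j).comap N.subtype)
        = m • (F j ⊓ N) := by
      rw [Submodule.map_smul'', Submodule.map_comap_subtype, inf_comm]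
    rw [← h1, Submodule.comap_map_eq_of_injective hinj]
  have hcomap : ∀ j, (F j).comap N.subtype = ((F j ⊓ N)).comap N.subtype := by
    intro j
    rw [Submodule.comap_inf]
    simp
  refine ⟨by simp [h0], fun j => Submodule.comap_mono (hmono j), fun j => ?_,
    j₀ + k, fun j hj => ?_⟩
  · rw [key j]
    exact Submodule.comap_mono (le_trans (smul_mono_right m (inf_le_left : F j ⊓ N ≤ F j)) (hsmul j))
  · show m • (F j).comap N.subtype = (F (j+1)).comap N.subtype
    rw [key j, hcomap (j + 1)]
    congr 1
    have hj1 : F j = m ^ (j - j₀) • P := by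
      rw [show j = j₀ + (j - j₀) by omega, hpow]
      congr 2
      omega
    have hj2 : F (j + 1) = m ^ (j - j₀ + 1) • P := by
      rw [show j + 1 = j₀ + (j - j₀ + 1) by omega, hpow]
    rw [hj1, hj2]
    exact hk (j - j₀) (by omega)
end

section
/- Let R = k[[X,Y]] over a field k and a > 3 an integer. The ideal I = (X²−Y³, X²−Y^a) is primary to the maximal ideal m = (X,Y), and dim_k R/I = 6. -/
/-!
Since `1 - Y^(a-3)` is a unit, `X² - Yᵃ = (X² - Y³) + Y³(1 - Y^(a-3))` shows that
`I = (X², Y³)`. A power series lies in `(X^p, Y^q)` exactly when its coefficients of `X^i Y^j`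
with `i < p`, `j < q` vanish, so these `pq` coefficients identify `R/(X^p, Y^q)` with `k^(pq)`.
Finally `(X^p, Y^q)` contains powers of `X` and `Y`, and every series with zero constant term
lies in `(X, Y)`, so its radical is `m`.
-/

open MvPowerSeries

theorem Ideal.span_sub_pair_eq_span_pair {R : Type*} [CommRing R] {x y w : R}
    (hw : IsUnit (1 - w)) : Ideal.span {x - y, x - y * w} = Ideal.span {x, y} := by
  rw [show x - y * w = (x - y) + y * (1 - w) by ring, Ideal.span_pair_left_add,
    Ideal.span_insert, Ideal.span_singleton_mul_right_unit hw, ← Ideal.span_insert,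
    Ideal.span_pair_sub_right]

namespace MvPowerSeries

theorem isUnit_one_sub_X_pow {σ R : Type*} [CommRing R] (i : σ) {n : ℕ} (hn : n ≠ 0) :
    IsUnit (1 - X i ^ n : MvPowerSeries σ R) := by
  simp [isUnit_iff_constantCoeff, hn]

theorem mem_maximalIdeal_iff_constantCoeff_eq_zero {σ k : Type*} [Field k]
    {f : MvPowerSeries σ k} : f ∈ IsLocalRing.maximalIdeal _ ↔ constantCoeff f = 0 := by
  rw [IsLocalRing.mem_maximalIdeal, mem_nonunits_iff, isUnit_iff_constantCoeff,
    isUnit_iff_ne_zero, not_not]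

theorem mem_span_X_pow_pair_iff {R : Type*} [CommRing R] {p q : ℕ}
    {f : MvPowerSeries (Fin 2) R} :
    f ∈ Ideal.span {X 0 ^ p, X 1 ^ q} ↔
      ∀ d : Fin 2 →₀ ℕ, d 0 < p → d 1 < q → coeff d f = 0 := by
  constructor
  · intro hf d h0 h1
    obtain ⟨u, v, rfl⟩ := Ideal.mem_span_pair.1 hf
    rw [map_add, X_pow_dvd_iff.1 (dvd_mul_left _ u) d h0,
      X_pow_dvd_iff.1 (dvd_mul_left _ v) d h1, add_zero]
  · intro h
    -- `g` keeps the monomials of `f` divisible by `Y^q`; the remaining ones are divisible by `X^p`.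
    let g : MvPowerSeries (Fin 2) R := fun d => if q ≤ d 1 then coeff d f else 0
    have hg_coeff (d) : coeff d g = if q ≤ d 1 then coeff d f else 0 := rfl
    have hg : X 1 ^ q ∣ g := X_pow_dvd_iff.2 fun d hd => by rw [hg_coeff, if_neg hd.not_ge]
    have hfg : X 0 ^ p ∣ f - g := X_pow_dvd_iff.2 fun d hd => by
      rw [map_sub, hg_coeff]
      split_ifs with hq
      · exact sub_self _
      · rw [h d hd (not_le.1 hq), sub_zero]
    obtain ⟨u, hu⟩ := hfg
    obtain ⟨v, hv⟩ := hg
    rw [← sub_add_cancel f g, hu, hv, Ideal.mem_span_pair]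
    exact ⟨u, v, by ring⟩

theorem radical_span_X_pow_pair {k : Type*} [Field k] {p q : ℕ} (hp : p ≠ 0) (hq : q ≠ 0) :
    (Ideal.span {X 0 ^ p, X 1 ^ q} : Ideal (MvPowerSeries (Fin 2) k)).radical =
      IsLocalRing.maximalIdeal _ := by
  refine le_antisymm ?_ fun f hf => ?_
  · rw [(IsLocalRing.maximalIdeal.isMaximal _).isPrime.radical_le_iff, Ideal.span_le]
    rintro g (rfl | rfl) <;>
      simp only [SetLike.mem_coe, mem_maximalIdeal_iff_constantCoeff_eq_zero, map_pow,
        constantCoeff_X, zero_pow hp, zero_pow hq]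
  · have hf_mem : f ∈ Ideal.span {X 0 ^ 1, X 1 ^ 1} :=
      mem_span_X_pow_pair_iff.2 fun d h0 h1 => by
        obtain rfl : d = 0 := by ext i; fin_cases i <;> simp <;> omega
        simpa using mem_maximalIdeal_iff_constantCoeff_eq_zero.1 hf
    refine Ideal.span_le.2 ?_ hf_mem
    rintro g (rfl | rfl)
    · exact ⟨p, by rw [pow_one]; exact Ideal.subset_span (by simp)⟩
    · exact ⟨q, by rw [pow_one]; exact Ideal.subset_span (by simp)⟩

noncomputable def exponentXY (i j : ℕ) : Fin 2 →₀ ℕ :=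
  Finsupp.single 0 i + Finsupp.single 1 j

@[simp]
theorem exponentXY_apply_zero (i j : ℕ) : exponentXY i j 0 = i := by
  simp [exponentXY]

@[simp]
theorem exponentXY_apply_one (i j : ℕ) : exponentXY i j 1 = j := by
  simp [exponentXY]

theorem exponentXY_apply_self (d : Fin 2 →₀ ℕ) : exponentXY (d 0) (d 1) = d := by
  ext i; fin_cases i <;> simp

section CoeffBox

variable (R : Type*) [CommRing R] (p q : ℕ)

noncomputable def coeffBox : MvPowerSeries (Fin 2) R →ₗ[R] (Fin p × Fin q → R) :=
  LinearMap.pi fun ij => coeff (exponentXY ij.1 ij.2)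

theorem coeffBox_surjective : Function.Surjective (coeffBox R p q) := by
  classical
  intro v
  refine ⟨∑ ij, monomial (exponentXY ij.1 ij.2) (v ij), funext fun ij => ?_⟩
  simp only [coeffBox, LinearMap.pi_apply, map_sum, coeff_monomial]
  rw [Finset.sum_eq_single ij (fun ij' _ hne => if_neg ?_) (by simp), if_pos rfl]
  intro h
  exact hne (Prod.ext (Fin.ext (by simpa using congr($h 0).symm))
    (Fin.ext (by simpa using congr($h 1).symm)))

theorem ker_coeffBox :
    LinearMap.ker (coeffBox R p q) =
      (Ideal.span {X 0 ^ p, X 1 ^ q} : Ideal (MvPowerSeries (Fin 2) R)).restrictScalars R := by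
  ext f
  rw [LinearMap.mem_ker, Submodule.restrictScalars_mem, mem_span_X_pow_pair_iff, funext_iff]
  refine ⟨fun h d h0 h1 => ?_, fun h ij => h _ (by simp) (by simp)⟩
  simpa [coeffBox, exponentXY_apply_self] using h (⟨d 0, h0⟩, ⟨d 1, h1⟩)

theorem finrank_quotient_span_X_pow_pair [Nontrivial R] :
    Module.finrank R (MvPowerSeries (Fin 2) R ⧸
      (Ideal.span {X 0 ^ p, X 1 ^ q} : Ideal (MvPowerSeries (Fin 2) R))) = p * q := by
  let e := (Submodule.Quotient.restrictScalarsEquiv R _).symm ≪≫ₗ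
    Submodule.quotEquivOfEq _ _ (ker_coeffBox R p q).symm ≪≫ₗ
    (coeffBox R p q).quotKerEquivOfSurjective (coeffBox_surjective R p q)
  rw [e.finrank_eq, Module.finrank_fintype_fun_eq_card, Fintype.card_prod, Fintype.card_fin,
    Fintype.card_fin]

end CoeffBox

end MvPowerSeries

/-- In `R = k[[X,Y]]` with maximal ideal `m = (X,Y)`, the ideal
`I = (X² - Y³, X² - Yᵃ)` (for `a > 3`) is `m`-primary, i.e. `√I = m`, and
`dim_k R/I = 6`. -/
theorem colength_six (k : Type) [Field k] (a : ℕ) (ha : 3 < a) :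
    (Ideal.span {(X 0 : MvPowerSeries (Fin 2) k) ^ 2 - X 1 ^ 3,
        (X 0 : MvPowerSeries (Fin 2) k) ^ 2 - X 1 ^ a}).radical =
      IsLocalRing.maximalIdeal (MvPowerSeries (Fin 2) k) ∧
    Module.finrank k (MvPowerSeries (Fin 2) k ⧸
      Ideal.span {(X 0 : MvPowerSeries (Fin 2) k) ^ 2 - X 1 ^ 3,
        (X 0 : MvPowerSeries (Fin 2) k) ^ 2 - X 1 ^ a}) = 6 := by
  have hY : (X 1 : MvPowerSeries (Fin 2) k) ^ a = X 1 ^ 3 * X 1 ^ (a - 3) := by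
    rw [← pow_add, Nat.add_sub_cancel' ha.le]
  rw [hY, Ideal.span_sub_pair_eq_span_pair (isUnit_one_sub_X_pow 1 (by omega))]
  exact ⟨radical_span_X_pow_pair two_ne_zero three_ne_zero,
    finrank_quotient_span_X_pow_pair k 2 3⟩
end

section
/- Let R = k[[X,Y]], m = (X,Y), M = R/(X²−Y³), N = R/(X²−Y^a) with a > 3. With gr_m(M) = gr_m(N) = k[x,y]/(x²) over G = k[x,y], the Hilbert series 1 + 2∑_{j≥1}t^j of Tor_0^G and z t² + 2z∑_{j≥3}t^j of Tor_1^G reduce, after performing exactly the negative consecutive cancellations z t² + t³ and 2z t^j + 2t^{j+1} for all j ≥ 3, to the series 1 + 2t + 2t² + t³ (the Hilbert series of gr of the 6-dimensional module R/(X²−Y³, X²−Y^a)) in homological degree 0 and to 0 in homological degree 1. -/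
open MvPowerSeries

/-- Bigraded Hilbert series of `Tor^G(gr M, gr N)`, `G = k[x,y]`,
`gr M = gr N = G/(x²)`:  row 0 is `1 + 2∑_{j≥1} t^j` and row 1 is `t² + 2∑_{j≥3} t^j`. -/
def torGrSeries : ℕ → ℕ → ℕ
  | 0, 0 => 1
  | 0, _ + 1 => 2
  | 1, j => if j = 2 then 1 else if 3 ≤ j then 2 else 0
  | _ + 2, _ => 0

/-- The result of the cancellations: `1 + 2t + 2t² + t³` in homological degree 0,
`0` in homological degree 1. -/
def reducedSeries : ℕ → ℕ → ℕ
  | 0, 0 => 1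
  | 0, 1 => 2
  | 0, 2 => 2
  | 0, 3 => 1
  | 0, _ + 4 => 0
  | _ + 1, _ => 0

/-- The total of the negative consecutive cancellations performed:
`z t² + t³` and `2z t^j + 2t^{j+1}` for all `j ≥ 3`. -/
def cancelSeries : ℕ → ℕ → ℕ
  | 1, 2 => 1
  | 1, j => if 3 ≤ j then 2 else 0
  | 0, 3 => 1
  | 0, j => if 4 ≤ j then 2 else 0
  | _ + 2, _ => 0

/-!
Since `1 - Y^(a-3)` is a unit, `(X² - Y³, X² - Yᵃ) = (X², Y³)`. This ideal and the powers `mʲ`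
are monomial ideals of `k⟦X,Y⟧`, cut out by the vanishing of coefficients off an upper set of
exponents, so `T/mʲT` has the monomials `XᵖY^q` with `p < 2`, `q < 3`, `p + q < j` as a `k`-basis.
Counting them by degree gives `1 + 2t + 2t² + t³`, the Hilbert series of `k[x,y]/(x², y³)`. The
identities between the bigraded series are a finite check.
-/

namespace Finsupp

def degreeUpperSet (σ : Type*) (j : ℕ) : UpperSet (σ →₀ ℕ) :=
  ⟨{d | j ≤ d.degree}, fun _ _ h hd => hd.trans (degree_mono h)⟩

@[simp]
theorem mem_degreeUpperSet {σ : Type*} {j : ℕ} {d : σ →₀ ℕ} :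
    d ∈ degreeUpperSet σ j ↔ j ≤ d.degree :=
  Iff.rfl

end Finsupp

namespace MvPowerSeries

variable {σ R : Type*}

section CommSemiring

variable [CommSemiring R]

def monomialIdeal (S : UpperSet (σ →₀ ℕ)) : Ideal (MvPowerSeries σ R) where
  carrier := {f | ∀ d ∉ S, coeff d f = 0}
  add_mem' hf hg d hd := by rw [map_add, hf d hd, hg d hd, add_zero]
  zero_mem' _ _ := map_zero _
  smul_mem' c f hf d hd := by
    classical
    rw [smul_eq_mul, coeff_mul]
    refine Finset.sum_eq_zero fun p hp => ?_
    have hp₂ : p.2 ≤ d := Finset.HasAntidiagonal.mem_antidiagonal.mp hp ▸ le_add_self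
    rw [hf p.2 fun h => hd (S.upper hp₂ h), mul_zero]

@[simp]
theorem mem_monomialIdeal {S : UpperSet (σ →₀ ℕ)} {f : MvPowerSeries σ R} :
    f ∈ monomialIdeal S ↔ ∀ d ∉ S, coeff d f = 0 :=
  Iff.rfl

theorem monomialIdeal_inf (S T : UpperSet (σ →₀ ℕ)) :
    monomialIdeal (S ⊓ T) = (monomialIdeal S ⊔ monomialIdeal T : Ideal (MvPowerSeries σ R)) := by
  classical
  refine le_antisymm (fun f hf => ?_) (sup_le ?_ ?_)
  · let g : MvPowerSeries σ R := fun d => if d ∈ S then coeff d f else 0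
    let h : MvPowerSeries σ R := fun d => if d ∈ S then 0 else coeff d f
    have hfgh : f = g + h := by
      ext d
      change coeff d f = (if d ∈ S then coeff d f else 0) + (if d ∈ S then 0 else coeff d f)
      split_ifs <;> simp
    rw [hfgh]
    refine Submodule.add_mem_sup (fun d hd => if_neg hd) (fun d hd => ?_)
    by_cases hdS : d ∈ S
    · exact if_pos hdS
    · exact (if_neg hdS).trans (hf d (by simp [hdS, hd]))
  · exact fun f hf d hd => hf d fun h => hd (UpperSet.mem_inf_iff.mpr (Or.inl h))
  · exact fun f hf d hd => hf d fun h => hd (UpperSet.mem_inf_iff.mpr (Or.inr h))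

theorem span_X_pow (i : σ) (n : ℕ) :
    Ideal.span {(X i : MvPowerSeries σ R) ^ n} =
      monomialIdeal (UpperSet.Ici (Finsupp.single i n)) := by
  ext f
  simp [Ideal.mem_span_singleton, X_pow_dvd_iff, Finsupp.single_le_iff]

theorem mul_mem_monomialIdeal_degreeUpperSet_succ {j : ℕ}
    {r s : MvPowerSeries σ R} (hr : constantCoeff r = 0)
    (hs : s ∈ monomialIdeal (Finsupp.degreeUpperSet σ j)) :
    r * s ∈ monomialIdeal (Finsupp.degreeUpperSet σ (j + 1)) := by
  classical
  intro d hd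
  rw [Finsupp.mem_degreeUpperSet, not_le] at hd
  rw [coeff_mul]
  refine Finset.sum_eq_zero fun p hp => ?_
  rw [← Finset.HasAntidiagonal.mem_antidiagonal.mp hp, map_add] at hd
  by_cases hp₁ : p.1 = 0
  · rw [hp₁, coeff_zero_eq_constantCoeff_apply, hr, zero_mul]
  · have : 1 ≤ p.1.degree := Nat.one_le_iff_ne_zero.mpr (mt (Finsupp.degree_eq_zero_iff _).mp hp₁)
    rw [hs p.2 (by simp only [Finsupp.mem_degreeUpperSet]; omega), mul_zero]

theorem exists_eq_sum_X_mul [Fintype σ] {j : ℕ} {f : MvPowerSeries σ R}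
    (hf : f ∈ monomialIdeal (Finsupp.degreeUpperSet σ (j + 1))) :
    ∃ g : σ → MvPowerSeries σ R,
      f = ∑ i, X i * g i ∧ ∀ i, g i ∈ monomialIdeal (Finsupp.degreeUpperSet σ j) := by
  classical
  have hvar (d : σ →₀ ℕ) (hd : d ≠ 0) : ∃ i, d i ≠ 0 := by simpa using DFunLike.ne_iff.mp hd
  choose v hv using hvar
  -- split `f` according to a variable `v d` occurring in each exponent `d ≠ 0`
  let piece (i : σ) : MvPowerSeries σ R := fun d =>
    if hd : d = 0 then 0 else if v d hd = i then coeff d f else 0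
  have hdvd (i : σ) : X i ∣ piece i := by
    refine X_dvd_iff.mpr fun d hdi => ?_
    change dite _ _ _ = 0
    split_ifs with hd hvi
    · rfl
    · exact absurd (hvi ▸ hdi) (hv d hd)
    · rfl
  choose g hg using hdvd
  refine ⟨g, ?_, fun i d hd => ?_⟩
  · ext d
    rw [map_sum]
    simp_rw [← hg]
    change coeff d f = ∑ i, dite (d = 0) (fun _ => 0) fun hd => if v d hd = i then coeff d f else 0
    by_cases hd : d = 0
    · simp [hd, hf 0 (by simp)]
    · simp [hd]
  · have h := congrArg (coeff (Finsupp.single i 1 + d)) (hg i)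
    rw [X_def, coeff_add_monomial_mul, one_mul] at h
    rw [← h]
    change dite _ _ _ = 0
    split_ifs
    · rfl
    · simp only [Finsupp.mem_degreeUpperSet, not_le] at hd
      exact hf _ (by simp only [Finsupp.mem_degreeUpperSet, map_add, Finsupp.degree_single]; omega)
    · rfl

end CommSemiring

section Field

variable {k : Type*} [Field k]

theorem mem_maximalIdeal_iff {f : MvPowerSeries σ k} :
    f ∈ IsLocalRing.maximalIdeal (MvPowerSeries σ k) ↔ constantCoeff f = 0 := by
  rw [IsLocalRing.mem_maximalIdeal, mem_nonunits_iff, isUnit_iff_constantCoeff,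
    isUnit_iff_ne_zero, not_not]

theorem maximalIdeal_pow_eq [Finite σ] (j : ℕ) :
    IsLocalRing.maximalIdeal (MvPowerSeries σ k) ^ j =
      monomialIdeal (Finsupp.degreeUpperSet σ j) := by
  have := Fintype.ofFinite σ
  induction j with
  | zero =>
    rw [pow_zero, Ideal.one_eq_top, eq_comm, eq_top_iff]
    exact fun f _ d hd => absurd (Nat.zero_le _) hd
  | succ j ih =>
    rw [pow_succ', ih]
    refine le_antisymm (Ideal.mul_le.mpr fun r hr s hs => ?_) fun f hf => ?_
    · exact mul_mem_monomialIdeal_degreeUpperSet_succ (mem_maximalIdeal_iff.mp hr) hs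
    · obtain ⟨g, rfl, hg⟩ := exists_eq_sum_X_mul hf
      exact Ideal.sum_mem _ fun i _ =>
        Ideal.mul_mem_mul (mem_maximalIdeal_iff.mpr (constantCoeff_X i)) (hg i)

theorem finrank_eq_card_of_ker_eq_monomialIdeal {M : Type*} [AddCommGroup M] [Module k M]
    (π : MvPowerSeries σ k →ₗ[k] M) (hπ : Function.Surjective π) (S : UpperSet (σ →₀ ℕ))
    (T : Finset (σ →₀ ℕ)) (hT : ∀ d, d ∈ T ↔ d ∉ S)
    (hker : ∀ f, π f = 0 ↔ f ∈ monomialIdeal S) :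
    Module.finrank k M = T.card := by
  classical
  let ρ : MvPowerSeries σ k →ₗ[k] (T → k) := LinearMap.pi fun d => coeff d.1
  have hρ : Function.Surjective ρ := fun v =>
    ⟨fun d => if h : d ∈ T then v ⟨d, h⟩ else 0, funext fun d => dif_pos d.2⟩
  have hker' : LinearMap.ker π = LinearMap.ker ρ := by
    ext f
    simp [hker, ρ, funext_iff, hT]
  rw [((π.quotKerEquivOfSurjective hπ).symm ≪≫ₗ Submodule.quotEquivOfEq _ _ hker' ≪≫ₗ
    ρ.quotKerEquivOfSurjective hρ).finrank_eq, Module.finrank_fintype_fun_eq_card,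
    Fintype.card_coe]

end Field

end MvPowerSeries

theorem Ideal.span_pair_sub_eq {A : Type*} [CommRing A] {x y u : A} (hu : IsUnit (1 - u)) :
    Ideal.span {x - y, x - y * u} = Ideal.span {x, y} := by
  have hx : x ∈ Ideal.span {x, y} := Ideal.subset_span (Set.mem_insert _ _)
  have hy : y ∈ Ideal.span {x, y} := Ideal.subset_span (Set.mem_insert_of_mem _ rfl)
  have hxy : x - y ∈ Ideal.span {x - y, x - y * u} := Ideal.subset_span (Set.mem_insert _ _)
  have hxyu : x - y * u ∈ Ideal.span {x - y, x - y * u} :=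
    Ideal.subset_span (Set.mem_insert_of_mem _ rfl)
  have hy' : y ∈ Ideal.span {x - y, x - y * u} := by
    rw [← Ideal.mul_unit_mem_iff_mem _ hu, show y * (1 - u) = (x - y * u) - (x - y) by ring]
    exact sub_mem hxyu hxy
  refine le_antisymm ?_ ?_ <;>
    rw [Ideal.span_le, Set.insert_subset_iff, Set.singleton_subset_iff]
  · exact ⟨sub_mem hx hy, sub_mem hx (Ideal.mul_mem_right _ _ hy)⟩
  · exact ⟨by simpa using add_mem hxy hy', hy'⟩

theorem Ideal.Quotient.mk_mem_smul_top_iff {A : Type*} [CommRing A] (I J : Ideal A) (x : A) :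
    Ideal.Quotient.mk I x ∈ J • (⊤ : Submodule A (A ⧸ I)) ↔ x ∈ J ⊔ I := by
  rw [Ideal.smul_top_eq_map, Submodule.restrictScalars_mem, Ideal.Quotient.algebraMap_eq,
    Ideal.mem_quotient_iff_mem_sup]

open Finset

theorem torGrSeries_eq_reducedSeries_add_cancelSeries (i j : ℕ) :
    torGrSeries i j = reducedSeries i j + cancelSeries i j := by
  rcases i with _ | _ | i <;> rcases j with _ | _ | _ | _ | j <;>
    simp [torGrSeries, reducedSeries, cancelSeries]

theorem reducedSeries_zero_eq_card (l : ℕ) :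
    reducedSeries 0 l = #{p ∈ range 2 ×ˢ range 3 | p.1 + p.2 = l} := by
  match l with
  | 0 | 1 | 2 | 3 => rfl
  | l + 4 =>
    refine (card_eq_zero.mpr (filter_eq_empty_iff.mpr fun p hp => ?_)).symm
    simp only [mem_product, mem_range] at hp
    omega

noncomputable def staircase (j : ℕ) : Finset (Fin 2 →₀ ℕ) :=
  {p ∈ range 2 ×ˢ range 3 | p.1 + p.2 < j}.map
    (Finsupp.equivFunOnFinite.trans (finTwoArrowEquiv ℕ)).symm.toEmbedding

theorem mem_staircase {j : ℕ} {d : Fin 2 →₀ ℕ} :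
    d ∈ staircase j ↔ d 0 < 2 ∧ d 1 < 3 ∧ d 0 + d 1 < j := by
  rw [staircase, mem_map_equiv]
  simp [and_assoc]

theorem card_staircase (j : ℕ) : #(staircase j) = ∑ l ∈ range j, reducedSeries 0 l := by
  rw [staircase, card_map]
  refine (card_eq_sum_card_fiberwise (t := range j) (f := fun p : ℕ × ℕ => p.1 + p.2)
    fun p hp => mem_range.mpr (mem_filter.mp hp).2).trans ?_
  refine sum_congr rfl fun l hl => ?_
  rw [reducedSeries_zero_eq_card, filter_filter]
  congr 1
  exact filter_congr fun p _ =>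
    and_iff_right_of_imp fun h => (show p.1 + p.2 < j from h ▸ mem_range.mp hl)

section

variable {k : Type*} [Field k]

theorem span_X_sq_sub_eq_monomialIdeal {a : ℕ} (ha : 3 < a) :
    Ideal.span {(X 0 : MvPowerSeries (Fin 2) k) ^ 2 - X 1 ^ 3, X 0 ^ 2 - X 1 ^ a} =
      monomialIdeal (UpperSet.Ici (Finsupp.single 0 2) ⊓ UpperSet.Ici (Finsupp.single 1 3)) := by
  have hu : IsUnit (1 - (X 1 : MvPowerSeries (Fin 2) k) ^ (a - 3)) := by
    simp [isUnit_iff_constantCoeff, zero_pow (by omega : a - 3 ≠ 0)]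
  rw [show (X 1 : MvPowerSeries (Fin 2) k) ^ a = X 1 ^ 3 * X 1 ^ (a - 3) by
      rw [← pow_add]; congr 1; omega,
    Ideal.span_pair_sub_eq hu, Ideal.span_insert, span_X_pow, span_X_pow, monomialIdeal_inf]

theorem finrank_quotient_span_X_sq_sub {a : ℕ} (ha : 3 < a) :
    Module.finrank k (MvPowerSeries (Fin 2) k ⧸
      Ideal.span {(X 0 : MvPowerSeries (Fin 2) k) ^ 2 - X 1 ^ 3, X 0 ^ 2 - X 1 ^ a}) =
      #(staircase 4) := by
  refine finrank_eq_card_of_ker_eq_monomialIdeal (Ideal.Quotient.mkₐ k _).toLinearMap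
    (Ideal.Quotient.mkₐ_surjective k _)
    (UpperSet.Ici (Finsupp.single 0 2) ⊓ UpperSet.Ici (Finsupp.single 1 3)) _
    (fun d => ?_) fun f => ?_
  · simp only [mem_staircase, UpperSet.mem_inf_iff, UpperSet.mem_Ici_iff, Finsupp.single_le_iff]
    omega
  · rw [AlgHom.toLinearMap_apply, Ideal.Quotient.mkₐ_eq_mk, Ideal.Quotient.eq_zero_iff_mem,
      span_X_sq_sub_eq_monomialIdeal ha]

theorem finrank_quotient_span_X_sq_sub_quotient_maximalIdeal_pow {a : ℕ} (ha : 3 < a) (j : ℕ) :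
    Module.finrank k
      ((MvPowerSeries (Fin 2) k ⧸
        Ideal.span {(X 0 : MvPowerSeries (Fin 2) k) ^ 2 - X 1 ^ 3, X 0 ^ 2 - X 1 ^ a}) ⧸
        ((IsLocalRing.maximalIdeal (MvPowerSeries (Fin 2) k)) ^ j •
          (⊤ : Submodule (MvPowerSeries (Fin 2) k)
            (MvPowerSeries (Fin 2) k ⧸
              Ideal.span {(X 0 : MvPowerSeries (Fin 2) k) ^ 2 - X 1 ^ 3, X 0 ^ 2 - X 1 ^ a})))) =
      #(staircase j) := by
  refine finrank_eq_card_of_ker_eq_monomialIdeal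
    ((Submodule.mkQ _).restrictScalars k ∘ₗ (Ideal.Quotient.mkₐ k _).toLinearMap)
    ((Submodule.mkQ_surjective _).comp (Ideal.Quotient.mkₐ_surjective k _))
    (Finsupp.degreeUpperSet _ j ⊓
      (UpperSet.Ici (Finsupp.single 0 2) ⊓ UpperSet.Ici (Finsupp.single 1 3))) _
    (fun d => ?_) fun f => ?_
  · simp only [mem_staircase, UpperSet.mem_inf_iff, UpperSet.mem_Ici_iff, Finsupp.single_le_iff,
      Finsupp.mem_degreeUpperSet, Finsupp.degree_eq_sum, Fin.sum_univ_two]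
    omega
  · rw [LinearMap.comp_apply, AlgHom.toLinearMap_apply, Ideal.Quotient.mkₐ_eq_mk,
      LinearMap.restrictScalars_apply, Submodule.mkQ_apply, Submodule.Quotient.mk_eq_zero,
      Ideal.Quotient.mk_mem_smul_top_iff, maximalIdeal_pow_eq, span_X_sq_sub_eq_monomialIdeal ha,
      ← monomialIdeal_inf]

end

/-- For `R = k[[X,Y]]`, `M = R/(X²-Y³)`, `N = R/(X²-Yᵃ)` (`a > 3`),
with `gr M = gr N = k[x,y]/(x²)`: subtracting from the bigraded series of
`Tor^{k[x,y]}(gr M, gr N)` exactly the negative consecutive cancellations `z t² + t³`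
and `2z t^j + 2t^{j+1}` (`j ≥ 3`) yields `1 + 2t + 2t² + t³` in homological degree 0 —
which is the Hilbert series of `gr` of the 6-dimensional module
`T = R/(X²-Y³, X²-Yᵃ) = Tor_0^R(M,N)`, recorded by its partial sums
`dim_k T/m^jT = ∑_{l<j} g₀(l)` — and `0` in homological degree 1. -/
theorem example_cancellations (k : Type) [Field k] (a : ℕ) (ha : 3 < a) :
    (∀ i j, torGrSeries i j = reducedSeries i j + cancelSeries i j) ∧
    (∀ j, reducedSeries 1 j = 0) ∧
    Module.finrank k (MvPowerSeries (Fin 2) k ⧸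
      Ideal.span {(X 0 : MvPowerSeries (Fin 2) k) ^ 2 - X 1 ^ 3,
        (X 0 : MvPowerSeries (Fin 2) k) ^ 2 - X 1 ^ a}) = 6 ∧
    ∀ j : ℕ, Module.finrank k
      ((MvPowerSeries (Fin 2) k ⧸
        Ideal.span {(X 0 : MvPowerSeries (Fin 2) k) ^ 2 - X 1 ^ 3,
          (X 0 : MvPowerSeries (Fin 2) k) ^ 2 - X 1 ^ a}) ⧸
        ((IsLocalRing.maximalIdeal (MvPowerSeries (Fin 2) k)) ^ j •
          (⊤ : Submodule (MvPowerSeries (Fin 2) k)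
            (MvPowerSeries (Fin 2) k ⧸
              Ideal.span {(X 0 : MvPowerSeries (Fin 2) k) ^ 2 - X 1 ^ 3,
                (X 0 : MvPowerSeries (Fin 2) k) ^ 2 - X 1 ^ a})))) =
      ∑ l ∈ Finset.range j, reducedSeries 0 l := by
  refine ⟨torGrSeries_eq_reducedSeries_add_cancelSeries, fun _ => rfl, ?_, fun j => ?_⟩
  · rw [finrank_quotient_span_X_sq_sub ha, card_staircase]
    rfl
  · rw [finrank_quotient_span_X_sq_sub_quotient_maximalIdeal_pow ha, card_staircase]
end

section
/- Let (R,m) be a Noetherian local ring, and let F be a complex of finitely generated R-modules where each F_i carries an m-stable filtration {F_i^j} compatible with the differential. If the associated graded complex gr(F) is exact at homological position i in all internal degrees, then F is exact at position i. -/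
/-!
A cycle `b` of `B` lies in `F⁰B = B`. If `b ∈ im d₂ + FʲB`, write `b = d₂ a + f`; then `f` is a
cycle in `FʲB`, hence a cycle of `gr(F)` in degree `j`, so exactness of `gr(F)` puts `f` in
`d₂(FʲA) + Fʲ⁺¹B`. Thus `b ∈ im d₂ + FʲB` for every `j`. Stability gives `Fʲ⁰⁺ᵏB ⊆ mᵏB`, so
the class of `b` in `B / im d₂` lies in every `mᵏ(B / im d₂)`, and vanishes by Krull's
intersection theorem.
-/

theorem IsMStableFiltration.exists_le_pow_smul_top {R M : Type*} [CommRing R] [AddCommGroup M]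
    [Module R M] {m : Ideal R} {F : ℕ → Submodule R M} (hF : IsMStableFiltration m F) :
    ∃ j₀, ∀ k, F (j₀ + k) ≤ m ^ k • ⊤ := by
  obtain ⟨j₀, hj₀⟩ := hF.2.2.2
  refine ⟨j₀, fun k => ?_⟩
  induction k with
  | zero => simp
  | succ k ih =>
    rw [← add_assoc, ← hj₀ _ (Nat.le_add_right _ _), pow_succ', mul_smul]
    exact smul_mono_right _ ih

theorem ker_le_range_sup_of_gr_exact {R A B C : Type*} [CommRing R]
    [AddCommGroup A] [Module R A] [AddCommGroup B] [Module R B] [AddCommGroup C] [Module R C]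
    {d₂ : A →ₗ[R] B} {d₁ : B →ₗ[R] C} (hcx : d₁.comp d₂ = 0)
    {FA : ℕ → Submodule R A} {FB : ℕ → Submodule R B} {FC : ℕ → Submodule R C}
    (hFB₀ : FB 0 = ⊤)
    (hgr : ∀ j, FB j ⊓ Submodule.comap d₁ (FC (j + 1)) ≤ (FA j).map d₂ ⊔ FB (j + 1)) (j : ℕ) :
    LinearMap.ker d₁ ≤ LinearMap.range d₂ ⊔ FB j := by
  intro b hb
  induction j with
  | zero => simp [hFB₀]
  | succ j ih =>
    obtain ⟨_, ⟨a, rfl⟩, f, hf, rfl⟩ := Submodule.mem_sup.mp ih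
    have hf_cycle : d₁ f = 0 := by
      simpa [← LinearMap.comp_apply, hcx] using (LinearMap.mem_ker.mp hb)
    have hf_gr : f ∈ LinearMap.range d₂ ⊔ FB (j + 1) :=
      sup_le_sup_right (LinearMap.map_le_range (f := d₂) (p := FA j)) (FB (j + 1))
        (hgr j ⟨hf, by simp [hf_cycle]⟩)
    exact add_mem (Submodule.mem_sup_left ⟨a, rfl⟩) hf_gr

theorem Submodule.mem_of_forall_mem_sup_pow_smul_top {R M : Type*} [CommRing R]
    [AddCommGroup M] [Module R M] {I : Ideal R} {N : Submodule R M} [IsHausdorff I (M ⧸ N)]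
    {x : M} (hx : ∀ k : ℕ, x ∈ N ⊔ I ^ k • ⊤) : x ∈ N := by
  rw [← Submodule.Quotient.mk_eq_zero]
  refine IsHausdorff.haus ‹_› _ fun k => SModEq.zero.mpr ?_
  have hxk := hx k
  rw [← Submodule.comap_map_mkQ, Submodule.mem_comap, Submodule.map_smul'', Submodule.map_top,
    Submodule.range_mkQ] at hxk
  exact hxk

theorem gr_exact_implies_exact_general (R A B C : Type*) [CommRing R] [IsNoetherianRing R]
    [IsLocalRing R]
    [AddCommGroup A] [Module R A]
    [AddCommGroup B] [Module R B] [Module.Finite R B]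
    [AddCommGroup C] [Module R C]
    (d₂ : A →ₗ[R] B) (d₁ : B →ₗ[R] C) (hcx : d₁.comp d₂ = 0)
    (FA : ℕ → Submodule R A) (FB : ℕ → Submodule R B) (FC : ℕ → Submodule R C)
    (hFB : IsMStableFiltration (IsLocalRing.maximalIdeal R) FB)
    (hgr : ∀ j, FB j ⊓ Submodule.comap d₁ (FC (j + 1)) ≤ (FA j).map d₂ ⊔ FB (j + 1)) :
    LinearMap.ker d₁ = LinearMap.range d₂ := by
  refine le_antisymm ?_ (LinearMap.range_le_ker_iff.mpr hcx)
  obtain ⟨j₀, hj₀⟩ := hFB.exists_le_pow_smul_top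
  intro b hb
  refine Submodule.mem_of_forall_mem_sup_pow_smul_top (I := IsLocalRing.maximalIdeal R) fun k => ?_
  exact sup_le_sup_left (hj₀ k) _ (ker_le_range_sup_of_gr_exact hcx hFB.1 hgr (j₀ + k) hb)

/-- Let `(R,m)` be Noetherian local and let
`A --d₂--> B --d₁--> C` be (three consecutive terms of) a complex of finitely generated
`R`-modules with `m`-stable filtrations compatible with the differentials.  If the
associated graded complex is exact at the middle position in every internal degree `j`
(every gr-cycle is a gr-boundary:
`B^j ∩ d₁⁻¹(C^{j+1}) ⊆ d₂(A^j) + B^{j+1}`), then the complex is exact at the middle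
position: `ker d₁ = range d₂`. -/
theorem gr_exact_implies_exact (R A B C : Type*) [CommRing R] [IsNoetherianRing R]
    [IsLocalRing R]
    [AddCommGroup A] [Module R A] [Module.Finite R A]
    [AddCommGroup B] [Module R B] [Module.Finite R B]
    [AddCommGroup C] [Module R C] [Module.Finite R C]
    (d₂ : A →ₗ[R] B) (d₁ : B →ₗ[R] C) (hcx : d₁.comp d₂ = 0)
    (FA : ℕ → Submodule R A) (FB : ℕ → Submodule R B) (FC : ℕ → Submodule R C)
    (hFA : IsMStableFiltration (IsLocalRing.maximalIdeal R) FA)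
    (hFB : IsMStableFiltration (IsLocalRing.maximalIdeal R) FB)
    (hFC : IsMStableFiltration (IsLocalRing.maximalIdeal R) FC)
    (hd₂ : ∀ j, (FA j).map d₂ ≤ FB j) (hd₁ : ∀ j, (FB j).map d₁ ≤ FC j)
    (hgr : ∀ j, FB j ⊓ Submodule.comap d₁ (FC (j + 1)) ≤ (FA j).map d₂ ⊔ FB (j + 1)) :
    LinearMap.ker d₁ = LinearMap.range d₂ :=
  gr_exact_implies_exact_general R A B C d₂ d₁ hcx FA FB FC hFB hgr
end
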